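/- Let m ≥ 1 and consider 2m modes indexed by pairs (a,j) with a ∈ {0,1} and j ∈ ℤ/mℤ, and the 2m-photon space ℂ^{T(2m,2m)} with tuples ν : {0,1}×(ℤ/mℤ) → ℕ. For x ∈ {0,1}^{ℤ/mℤ} let ν_x be the tuple with ν_x(a,j) = 2 if a = x_j and ν_x(a,j) = 0 otherwise, and set v = 2^{−m/2} ∑_{x∈{0,1}^{ℤ/mℤ}} (∏_{j≠0} (−1)^{x_j}) e_{ν_x}. Let g₁ be the 2m×2m diagonal unitary with g₁ e_{(a,j)} = (−1)^a e_{(a,j)}, let g₂ be the permutation matrix with g₂ e_{(a,j)} = e_{(a,j+1)}, let G be the (abelian, order 2m) group generated by g₁ and g₂, and let P be the orthogonal projection onto {w : B_{2m}(g) w = w for all g ∈ G}. Then ‖P v‖² = 1/m. -/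

import Mathlib

namespace BSF

variable {α : Type*} [Fintype α] [DecidableEq α]

/-- The canonical list in which each index `i` is repeated `ν i` times. -/
noncomputable def repList (ν : α → ℕ) : List α :=
  Finset.univ.toList.flatMap fun i => List.replicate (ν i) i

set_option linter.unusedSectionVars false in
lemma repList_length (ν : α → ℕ) : (repList ν).length = ∑ i, ν i := by
  simp [repList, List.length_flatMap]

/-- The index set `T(m,n)`: occupation-number tuples with total `n`. -/
def BosonIdx (α : Type*) [Fintype α] (n : ℕ) := {ν : α → ℕ // ∑ i, ν i = n}

instance {n : ℕ} : DecidableEq (BosonIdx α n) :=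
  inferInstanceAs (DecidableEq {ν : α → ℕ // ∑ i, ν i = n})

noncomputable instance {n : ℕ} : Fintype (BosonIdx α n) :=
  Fintype.ofInjective
    (fun ν : BosonIdx α n => fun i : α =>
      (⟨ν.1 i, by
        have h := Finset.single_le_sum (f := ν.1) (fun j _ => Nat.zero_le _) (Finset.mem_univ i)
        rw [ν.2] at h
        omega⟩ : Fin (n + 1)))
    (fun a b hab => Subtype.ext (funext fun i => congrArg Fin.val (congrFun hab i)))

/-- The permanent of a square complex matrix. -/
noncomputable def permanent {n : ℕ} (M : Matrix (Fin n) (Fin n) ℂ) : ℂ :=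
  ∑ σ : Equiv.Perm (Fin n), ∏ i, M (σ i) i

/-- The canonical repetition function associated with an occupation tuple. -/
noncomputable def repFun {n : ℕ} (ν : BosonIdx α n) : Fin n → α :=
  fun k => (repList ν.1).get (Fin.cast ((repList_length ν.1).trans ν.2).symm k)

/-- The `n`-boson representation of a matrix `S`. -/
noncomputable def bosonRep (n : ℕ) (S : Matrix α α ℂ) :
    Matrix (BosonIdx α n) (BosonIdx α n) ℂ :=
  Matrix.of fun ν ν' =>
    permanent (Matrix.of fun k l => S (repFun ν k) (repFun ν' l)) /
      (Real.sqrt ((∏ i, (ν.1 i).factorial * (ν'.1 i).factorial : ℕ) : ℝ) : ℂ)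

/-- Relabeling an occupation tuple by (precomposition with) a permutation of the modes. -/
def permIdx {n : ℕ} (σ : Equiv.Perm α) (ν : BosonIdx α n) : BosonIdx α n :=
  ⟨ν.1 ∘ σ, show ∑ i, ν.1 (σ i) = n from (Equiv.sum_comp σ ν.1).trans ν.2⟩

/-- The occupation tuple placing `2` photons in mode `(x j, j)` for each `j : ZMod m`. -/
def nuX (m : ℕ) [NeZero m] (x : ZMod m → Fin 2) : BosonIdx (Fin 2 × ZMod m) (2 * m) :=
  ⟨fun p => if p.1 = x p.2 then 2 else 0, by
    rw [Fintype.sum_prod_type, Finset.sum_comm]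
    have h : ∀ j : ZMod m, (∑ a : Fin 2, if a = x j then 2 else 0) = 2 := by
      intro j; simp [Finset.sum_ite_eq]
    simp [h, Finset.sum_const, mul_comm]⟩


/-!
Every element of `G = ⟨g₁, g₂⟩` is a signed cyclic shift of the modes, and its boson
representation sends `e_{ν_x}` to `e_{ν_y}` with `y = x(· - l)` and no sign, because all
occupation numbers of `ν_x` are even. So the average `w` of the `m` cyclic translates of `v` is
`G`-invariant and `P w = w`. On the other hand `B(g₂)` is a permutation matrix with
`B(g₂) P = P`; as `P` is Hermitian this gives `P B(g₂) = P`, so `P` does not see the translation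
and `P v = P w = w`. Finally `‖P v‖² = ⟨v, P v⟩ = (1/m) ∑ₗ ⟨v, v translated by l⟩`, and the
translate of `v` by `l` is the state with `|β⁺⟩` at mode `l`, orthogonal to `v` for `l ≠ 0`.
-/

open Equiv Matrix

section FiberCount

theorem exists_perm_comp_eq_of_card_fiber_eq {γ β : Type*} [Fintype γ] [DecidableEq β]
    {f g : γ → β} (h : ∀ i, Fintype.card {k // f k = i} = Fintype.card {k // g k = i}) :
    ∃ σ : Perm γ, f ∘ σ = g :=
  ⟨(sigmaFiberEquiv g).symm.trans ((sigmaCongrRight fun i =>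
      Fintype.equivOfCardEq (h i).symm).trans (sigmaFiberEquiv f)),
    funext fun l => ((Fintype.equivOfCardEq (h (g l)).symm) ⟨l, rfl⟩).2⟩

theorem card_perm_comp_eq_of_card_fiber_eq {γ β : Type*} [Fintype γ] [DecidableEq γ]
    [Fintype β] [DecidableEq β] {f g : γ → β}
    (h : ∀ i, Fintype.card {k // f k = i} = Fintype.card {k // g k = i}) :
    Fintype.card {σ : Perm γ // f ∘ σ = g} = ∏ i, (Fintype.card {k // f k = i}).factorial := by
  obtain ⟨σ₀, rfl⟩ := exists_perm_comp_eq_of_card_fiber_eq h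
  rw [← DomMulAct.stabilizer_card f]
  refine Fintype.card_congr (subtypeEquiv (Equiv.mulRight σ₀⁻¹) fun σ => ?_)
  simp only [coe_mulRight, Perm.coe_mul, Perm.coe_inv, ← Function.comp_assoc, comp_symm_eq]

theorem card_perm_comp_eq_of_card_fiber_ne {γ β : Type*} [Fintype γ] [DecidableEq γ]
    [DecidableEq β] {f g : γ → β} {i : β}
    (h : Fintype.card {k // f k = i} ≠ Fintype.card {k // g k = i}) :
    Fintype.card {σ : Perm γ // f ∘ σ = g} = 0 :=
  Fintype.card_eq_zero_iff.mpr ⟨fun ⟨σ, hσ⟩ => h <| by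
    subst hσ; exact (Fintype.card_congr (σ.subtypeEquiv fun _ => Iff.rfl)).symm⟩

theorem prod_comp_eq_prod_pow_card_fiber {γ β M : Type*} [Fintype γ] [Fintype β] [DecidableEq β]
    [CommMonoid M] (u : γ → β) (c : β → M) :
    ∏ k, c (u k) = ∏ i, c i ^ Fintype.card {k // u k = i} := by
  rw [← Fintype.prod_fiberwise u (fun k => c (u k))]
  refine Finset.prod_congr rfl fun i _ => ?_
  rw [Finset.prod_congr rfl fun k _ => congrArg c k.2, Finset.prod_const, Finset.card_univ]

end FiberCount

section MonomialMatrix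

theorem count_repList (ν : α → ℕ) (i : α) : (repList ν).count i = ν i := by
  simp [repList, List.count_flatMap, List.count_replicate, Finset.sum_map_toList]

theorem card_fiber_repFun {n : ℕ} (ν : BosonIdx α n) (i : α) :
    Fintype.card {k // repFun ν k = i} = ν.1 i := by
  rw [Fintype.card_subtype, ← count_repList ν.1 i]
  exact Fin.card_filter_univ_eq_vector_get_eq_count i ⟨repList ν.1, (repList_length ν.1).trans ν.2⟩

theorem permIdx_permIdx {ι : Type*} [Fintype ι] {n : ℕ} (σ τ : Perm ι) (ν : BosonIdx ι n) :
    permIdx τ (permIdx σ ν) = permIdx (σ * τ) ν :=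
  rfl

theorem permIdx_one {ι : Type*} [Fintype ι] {n : ℕ} (ν : BosonIdx ι n) : permIdx 1 ν = ν :=
  rfl

def permIdxEquiv {ι : Type*} [Fintype ι] (n : ℕ) (σ : Perm ι) : Perm (BosonIdx ι n) where
  toFun := permIdx σ
  invFun := permIdx σ⁻¹
  left_inv ν := by rw [permIdx_permIdx, mul_inv_cancel, permIdx_one]
  right_inv ν := by rw [permIdx_permIdx, inv_mul_cancel, permIdx_one]

@[simp]
theorem permIdxEquiv_apply {ι : Type*} [Fintype ι] (n : ℕ) (σ : Perm ι) (ν : BosonIdx ι n) :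
    permIdxEquiv n σ ν = permIdx σ ν :=
  rfl

def monomialMatrix {ι : Type*} [DecidableEq ι] (π : Perm ι) (c : ι → ℂ) : Matrix ι ι ℂ :=
  of fun p q => if p = π q then c p else 0

theorem monomialMatrix_one {ι : Type*} [Fintype ι] [DecidableEq ι] :
    monomialMatrix (1 : Perm ι) 1 = 1 := by
  ext p q
  by_cases h : p = q <;> simp [monomialMatrix, one_apply, h]

theorem monomialMatrix_mul {ι : Type*} [Fintype ι] [DecidableEq ι] (π τ : Perm ι)
    (c d : ι → ℂ) :
    monomialMatrix π c * monomialMatrix τ d =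
      monomialMatrix (π * τ) fun p => c p * d (π.symm p) := by
  ext p q
  rw [mul_apply, Finset.sum_eq_single (τ q) (fun r _ hr => by simp [monomialMatrix, hr])
    (by simp)]
  by_cases h : p = π (τ q) <;> simp [monomialMatrix, h]

theorem permanent_monomialMatrix_repFun {n : ℕ} (π : Perm α) (c : α → ℂ) (ν ν' : BosonIdx α n) :
    permanent (of fun k l => monomialMatrix π c (repFun ν k) (repFun ν' l)) =
      Fintype.card {σ : Perm (Fin n) // repFun ν ∘ σ = π ∘ repFun ν'} * ∏ i, c i ^ ν.1 i := by
  have hterm (σ : Perm (Fin n)) : ∏ l, monomialMatrix π c (repFun ν (σ l)) (repFun ν' l) =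
      if repFun ν ∘ σ = π ∘ repFun ν' then ∏ i, c i ^ ν.1 i else 0 := by
    simp only [monomialMatrix, of_apply, Finset.prod_ite_zero, Finset.mem_univ, true_imp_iff,
      funext_iff, Function.comp_apply]
    congr 1
    rw [Equiv.prod_comp σ (fun k => c (repFun ν k)), prod_comp_eq_prod_pow_card_fiber]
    simp only [card_fiber_repFun]
  simp only [permanent, of_apply, hterm, Finset.sum_ite, Finset.sum_const_zero, add_zero,
    Finset.sum_const, nsmul_eq_mul, Fintype.card_subtype]

theorem bosonRep_monomialMatrix (n : ℕ) (π : Perm α) (c : α → ℂ) :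
    bosonRep n (monomialMatrix π c) =
      diagonal (fun ν => ∏ i, c i ^ ν.1 i) * (permIdxEquiv n π).permMatrix ℂ := by
  ext ν ν'
  have hfib (i : α) : Fintype.card {k // (π ∘ repFun ν') k = i} = ν'.1 (π.symm i) := by
    rw [← card_fiber_repFun ν' (π.symm i)]
    exact Fintype.card_congr (subtypeEquivRight fun k => π.eq_symm_apply.symm)
  rw [bosonRep, of_apply, permanent_monomialMatrix_repFun, diagonal_mul, Perm.permMatrix,
    PEquiv.toMatrix_toPEquiv_apply, Pi.single_apply, permIdxEquiv_apply]
  by_cases h : ν' = permIdx π ν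
  · have hν' : ν'.1 = ν.1 ∘ π := congrArg Subtype.val h
    have hcard : Fintype.card {σ : Perm (Fin n) // repFun ν ∘ σ = π ∘ repFun ν'} =
        ∏ i, (ν.1 i).factorial := by
      rw [card_perm_comp_eq_of_card_fiber_eq fun i => by
        rw [hfib, card_fiber_repFun, hν', Function.comp_apply, apply_symm_apply]]
      simp only [card_fiber_repFun]
    have hden : ∏ i, (ν.1 i).factorial * (ν'.1 i).factorial =
        (∏ i, (ν.1 i).factorial) * ∏ i, (ν.1 i).factorial := by
      rw [Finset.prod_mul_distrib, hν']
      simp only [Function.comp_apply, Equiv.prod_comp π fun i => (ν.1 i).factorial]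
    have hpos : ((∏ i, (ν.1 i).factorial : ℕ) : ℂ) ≠ 0 := by
      simp [Finset.prod_ne_zero_iff, Nat.factorial_ne_zero]
    rw [if_pos h, hcard, hden, Nat.cast_mul, Real.sqrt_mul_self (Nat.cast_nonneg _),
      Complex.ofReal_natCast, mul_one, mul_div_cancel_left₀ _ hpos]
  · obtain ⟨i, hi⟩ : ∃ i, ν.1 i ≠ ν'.1 (π.symm i) := by
      by_contra! hall
      exact h (Subtype.ext (funext fun j => by
        show ν'.1 j = ν.1 (π j)
        simpa using (hall (π j)).symm))
    rw [card_perm_comp_eq_of_card_fiber_ne (i := i) (by rwa [hfib, card_fiber_repFun]), if_neg h]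
    simp

theorem bosonRep_monomialMatrix_mulVec_single (n : ℕ) (π : Perm α) (c : α → ℂ)
    (ν : BosonIdx α n) :
    bosonRep n (monomialMatrix π c) *ᵥ Pi.single (permIdx π ν) 1 =
      Pi.single ν (∏ i, c i ^ ν.1 i) := by
  rw [bosonRep_monomialMatrix, ← mulVec_mulVec, mulVec_single_one, ← permIdxEquiv_apply n,
    Perm.permMatrix, col, PEquiv.transpose_toMatrix_toPEquiv_apply, symm_apply_apply,
    diagonal_mulVec_single, mul_one]

end MonomialMatrix

section HermitianProjection

theorem _root_.Matrix.IsHermitian.mul_permMatrix_eq_self {ι R : Type*} [Fintype ι]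
    [DecidableEq ι] [Semiring R] [StarRing R] {P : Matrix ι ι R} (hP : P.IsHermitian)
    {σ : Perm ι} (h : σ.permMatrix R * P = P) : P * σ.permMatrix R = P := by
  have h' : P * σ⁻¹.permMatrix R = P := by
    simpa only [conjTranspose_mul, conjTranspose_permMatrix, hP.eq] using congrArg conjTranspose h
  calc P * σ.permMatrix R = P * σ⁻¹.permMatrix R * σ.permMatrix R := by rw [h']
    _ = P := by rw [mul_assoc, ← permMatrix_mul, mul_inv_cancel, permMatrix_one, mul_one]

theorem mul_eq_self_of_mulVec_mulVec_eq {ι R : Type*} [Fintype ι] [DecidableEq ι] [Semiring R]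
    {A P : Matrix ι ι R} (h : ∀ z, A *ᵥ (P *ᵥ z) = P *ᵥ z) : A * P = P := by
  ext i j
  have := congrFun (h (Pi.single j 1)) i
  rwa [mulVec_mulVec, mulVec_single_one, mulVec_single_one, col_apply, col_apply] at this

theorem sum_norm_sq_mulVec_eq_star_dotProduct {ι 𝕜 : Type*} [Fintype ι] [RCLike 𝕜]
    {P : Matrix ι ι 𝕜} (hP : P.IsHermitian) (hPP : P * P = P) (v : ι → 𝕜) :
    ((∑ i, ‖(P *ᵥ v) i‖ ^ 2 : ℝ) : 𝕜) = star v ⬝ᵥ (P *ᵥ v) := by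
  calc ((∑ i, ‖(P *ᵥ v) i‖ ^ 2 : ℝ) : 𝕜) = star (P *ᵥ v) ⬝ᵥ (P *ᵥ v) := by
        simp [dotProduct, RCLike.conj_mul]
    _ = star v ⬝ᵥ (P *ᵥ v) := by
        rw [star_mulVec, ← dotProduct_mulVec, hP.eq, mulVec_mulVec, hPP]

end HermitianProjection

section CyclicShift

variable {m : ℕ}

def modeShift (l : ZMod m) : Perm (Fin 2 × ZMod m) :=
  prodCongr (Equiv.refl _) (Equiv.addRight l)

theorem modeShift_zero : modeShift (0 : ZMod m) = 1 :=
  Equiv.ext fun p => by simp [modeShift]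

theorem modeShift_mul (k l : ZMod m) : modeShift k * modeShift l = modeShift (k + l) :=
  Equiv.ext fun p => Prod.ext rfl (by simp [modeShift, add_assoc, add_comm l])

theorem monomialMatrix_modeShift_zero :
    monomialMatrix (modeShift (0 : ZMod m)) (fun p => (-1) ^ (p.1 : ℕ)) =
      diagonal fun p => (-1) ^ (p.1 : ℕ) := by
  ext p q
  simp [monomialMatrix, modeShift, diagonal_apply]

theorem monomialMatrix_modeShift_one :
    monomialMatrix (modeShift (1 : ZMod m)) 1 =
      of fun p q => if p = (q.1, q.2 + 1) then 1 else 0 := by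
  ext p q
  simp [monomialMatrix, modeShift, Prod.map]

def shiftConfig (l : ZMod m) : Perm (ZMod m → Fin 2) :=
  arrowCongr (Equiv.addRight l).symm (Equiv.refl _)

@[simp]
theorem shiftConfig_apply (l : ZMod m) (x : ZMod m → Fin 2) (j : ZMod m) :
    shiftConfig l x j = x (j + l) :=
  rfl

theorem shiftConfig_zero : shiftConfig (0 : ZMod m) = 1 :=
  Equiv.ext fun x => funext fun j => by simp

theorem shiftConfig_shiftConfig (k l : ZMod m) (x : ZMod m → Fin 2) :
    shiftConfig l (shiftConfig k x) = shiftConfig (l + k) x :=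
  funext fun j => by simp [add_assoc]

end CyclicShift

section BellVector

variable {m : ℕ} [NeZero m]

theorem nuX_injective : Function.Injective (nuX m) := by
  intro x y h
  funext j
  have := congrArg (fun ν => ν.1 (x j, j)) h
  simp only [nuX] at this
  split_ifs at this <;> simp_all

theorem permIdx_modeShift_nuX (l : ZMod m) (x : ZMod m → Fin 2) :
    permIdx (modeShift l) (nuX m x) = nuX m (shiftConfig l x) :=
  rfl

theorem prod_pow_nuX_eq_one {c : Fin 2 × ZMod m → ℂ} (hc : ∀ p, c p ^ 2 = 1)
    (x : ZMod m → Fin 2) : ∏ p, c p ^ (nuX m x).1 p = 1 :=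
  Finset.prod_eq_one fun p _ => by
    simp only [nuX]
    split_ifs
    exacts [hc p, pow_zero _]

def bellVec : ((ZMod m → Fin 2) → ℂ) →ₗ[ℂ] BosonIdx (Fin 2 × ZMod m) (2 * m) → ℂ :=
  Fintype.linearCombination ℂ fun x => Pi.single (nuX m x) 1

theorem bellVec_apply_nuX (f : (ZMod m → Fin 2) → ℂ) (x : ZMod m → Fin 2) :
    bellVec f (nuX m x) = f x := by
  simp [bellVec, Fintype.linearCombination_apply, Pi.single_apply, nuX_injective.eq_iff]

theorem star_bellVec_dotProduct (f : (ZMod m → Fin 2) → ℂ)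
    (z : BosonIdx (Fin 2 × ZMod m) (2 * m) → ℂ) :
    star (bellVec f) ⬝ᵥ z = ∑ x, star (f x) * z (nuX m x) := by
  simp [bellVec, Fintype.linearCombination_apply, star_sum, sum_dotProduct]

theorem bosonRep_monomialMatrix_modeShift_mulVec_bellVec (l : ZMod m)
    {c : Fin 2 × ZMod m → ℂ} (hc : ∀ p, c p ^ 2 = 1) (f : (ZMod m → Fin 2) → ℂ) :
    bosonRep (2 * m) (monomialMatrix (modeShift l) c) *ᵥ bellVec f =
      bellVec (f ∘ shiftConfig l) := by
  have hsingle (y : ZMod m → Fin 2) :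
      bosonRep (2 * m) (monomialMatrix (modeShift l) c) *ᵥ Pi.single (nuX m (shiftConfig l y)) 1 =
        Pi.single (nuX m y) 1 := by
    rw [← permIdx_modeShift_nuX, bosonRep_monomialMatrix_mulVec_single, prod_pow_nuX_eq_one hc]
  rw [bellVec, Fintype.linearCombination_apply, ← Equiv.sum_comp (shiftConfig l)]
  simp only [mulVec_sum, mulVec_smul, hsingle]
  rfl

end BellVector

section Signs

variable {m : ℕ} [NeZero m]

/-- The amplitude signs of the state with `|β⁺⟩` on mode `k` and `|β⁻⟩` on all other modes. -/
def bellSign (k : ZMod m) (x : ZMod m → Fin 2) : ℂ :=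
  ∏ j ∈ Finset.univ.erase k, (-1) ^ (x j : ℕ)

theorem bellSign_eq_prod_ite (k : ZMod m) (x : ZMod m → Fin 2) :
    bellSign k x = ∏ j, if j = k then 1 else (-1) ^ (x j : ℕ) := by
  rw [bellSign, ← Finset.mul_prod_erase _ _ (Finset.mem_univ k), if_pos rfl, one_mul]
  exact Finset.prod_congr rfl fun j hj => (if_neg (Finset.ne_of_mem_erase hj)).symm

theorem bellSign_shiftConfig (k l : ZMod m) (x : ZMod m → Fin 2) :
    bellSign k (shiftConfig l x) = bellSign (k + l) x := by
  rw [bellSign_eq_prod_ite, bellSign_eq_prod_ite,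
    ← Equiv.prod_comp (Equiv.addRight l) fun j => if j = k + l then 1 else (-1) ^ (x j : ℕ)]
  simp

-- The sum factorizes over the modes; for `k ≠ l` the factor of mode `k` is `1 + (-1) = 0`.
theorem sum_bellSign_mul_bellSign (k l : ZMod m) :
    ∑ x, bellSign k x * bellSign l x = if k = l then 2 ^ m else 0 := by
  simp only [bellSign_eq_prod_ite, ← Finset.prod_mul_distrib]
  rw [← Fintype.prod_sum (κ := fun _ => Fin 2) fun j b =>
    (if j = k then 1 else (-1 : ℂ) ^ (b : ℕ)) * if j = l then 1 else (-1) ^ (b : ℕ)]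
  simp only [Fin.sum_univ_two, Fin.val_zero, Fin.val_one, pow_zero, ite_self, mul_one, pow_one]
  split_ifs with hkl
  · subst hkl
    trans ∏ _j : ZMod m, (2 : ℂ)
    · exact Finset.prod_congr rfl fun j _ => by split_ifs <;> norm_num
    · simp
  · exact Finset.prod_eq_zero (Finset.mem_univ k) (by simp [hkl])

noncomputable def bellAmplitude (m : ℕ) [NeZero m] : (ZMod m → Fin 2) → ℂ :=
  ((Real.sqrt 2 ^ m : ℝ) : ℂ)⁻¹ • bellSign 0

noncomputable def shiftAverage (f : (ZMod m → Fin 2) → ℂ) : (ZMod m → Fin 2) → ℂ :=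
  (m : ℂ)⁻¹ • ∑ l, f ∘ shiftConfig l

theorem shiftAverage_comp_shiftConfig (f : (ZMod m → Fin 2) → ℂ) (k : ZMod m) :
    shiftAverage f ∘ shiftConfig k = shiftAverage f := by
  funext x
  simp only [shiftAverage, Function.comp_apply, Pi.smul_apply, Finset.sum_apply,
    shiftConfig_shiftConfig]
  congr 1
  exact Equiv.sum_comp (Equiv.addRight k) fun l => f (shiftConfig l x)

theorem sum_star_mul_shiftAverage_bellAmplitude :
    ∑ x, star (bellAmplitude m x) * shiftAverage (bellAmplitude m) x = 1 / m := by
  set c : ℂ := ((Real.sqrt 2 ^ m : ℝ) : ℂ)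
  have hc : c ^ 2 = 2 ^ m := by
    rw [← Complex.ofReal_pow, ← pow_mul, mul_comm, pow_mul, Real.sq_sqrt zero_le_two]
    push_cast
    rfl
  have hstar (x : ZMod m → Fin 2) : star (bellAmplitude m x) = c⁻¹ * bellSign 0 x := by
    simp [bellAmplitude, c, bellSign, star_prod]
  have hshift (l : ZMod m) (x : ZMod m → Fin 2) :
      bellAmplitude m (shiftConfig l x) = c⁻¹ * bellSign l x := by
    simp [bellAmplitude, c, bellSign_shiftConfig]
  calc ∑ x, star (bellAmplitude m x) * shiftAverage (bellAmplitude m) x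
      = (m : ℂ)⁻¹ * (c⁻¹ ^ 2 * ∑ l, ∑ x, bellSign 0 x * bellSign l x) := by
        simp only [hstar, shiftAverage, Pi.smul_apply, Finset.sum_apply, Function.comp_apply,
          hshift, smul_eq_mul, Finset.mul_sum]
        rw [Finset.sum_comm]
        exact Finset.sum_congr rfl fun l _ => Finset.sum_congr rfl fun x _ => by ring
    _ = 1 / m := by
        simp only [sum_bellSign_mul_bellSign, Finset.sum_ite_eq, Finset.mem_univ, if_true]
        rw [inv_pow, hc, inv_mul_cancel₀ (pow_ne_zero _ two_ne_zero), mul_one, one_div]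

end Signs

section Stabilizer

variable {m : ℕ} [NeZero m]

def signedShifts (m : ℕ) [NeZero m] :
    Submonoid (Matrix (Fin 2 × ZMod m) (Fin 2 × ZMod m) ℂ) where
  carrier := {g | ∃ l c, (∀ p, c p ^ 2 = 1) ∧ g = monomialMatrix (modeShift l) c}
  mul_mem' := by
    rintro _ _ ⟨k, c, hc, rfl⟩ ⟨l, d, hd, rfl⟩
    exact ⟨k + l, fun p => c p * d ((modeShift k).symm p),
      fun p => by rw [mul_pow, hc, hd, one_mul], by rw [monomialMatrix_mul, modeShift_mul]⟩
  one_mem' := ⟨0, 1, fun _ => one_pow 2, by rw [modeShift_zero, monomialMatrix_one]⟩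

theorem closure_le_signedShifts :
    Submonoid.closure {diagonal fun p : Fin 2 × ZMod m => (-1 : ℂ) ^ (p.1 : ℕ),
      of fun p q => if p = (q.1, q.2 + 1) then 1 else 0} ≤ signedShifts m := by
  rw [Submonoid.closure_le, Set.insert_subset_iff, Set.singleton_subset_iff]
  exact ⟨⟨0, _, fun p => by rw [pow_right_comm, neg_one_sq, one_pow],
    monomialMatrix_modeShift_zero.symm⟩,
    ⟨1, 1, fun _ => one_pow 2, monomialMatrix_modeShift_one.symm⟩⟩

theorem bosonRep_mulVec_bellVec_shiftAverage {g : Matrix (Fin 2 × ZMod m) (Fin 2 × ZMod m) ℂ}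
    (hg : g ∈ signedShifts m) (f : (ZMod m → Fin 2) → ℂ) :
    bosonRep (2 * m) g *ᵥ bellVec (shiftAverage f) = bellVec (shiftAverage f) := by
  obtain ⟨l, c, hc, rfl⟩ := hg
  rw [bosonRep_monomialMatrix_modeShift_mulVec_bellVec l hc, shiftAverage_comp_shiftConfig]

variable {P : Matrix (BosonIdx (Fin 2 × ZMod m) (2 * m)) (BosonIdx (Fin 2 × ZMod m) (2 * m)) ℂ}

theorem mulVec_bellVec_comp_shiftConfig (hP : P.IsHermitian)
    (hfix : ∀ z, bosonRep (2 * m) (monomialMatrix (modeShift 1) 1) *ᵥ (P *ᵥ z) = P *ᵥ z)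
    (f : (ZMod m → Fin 2) → ℂ) (l : ZMod m) :
    P *ᵥ bellVec (f ∘ shiftConfig l) = P *ᵥ bellVec f := by
  have hperm : bosonRep (2 * m) (monomialMatrix (modeShift 1) 1) =
      (permIdxEquiv (2 * m) (modeShift (1 : ZMod m))).permMatrix ℂ := by
    simp [bosonRep_monomialMatrix]
  have hstep (f : (ZMod m → Fin 2) → ℂ) : P *ᵥ bellVec (f ∘ shiftConfig 1) = P *ᵥ bellVec f := by
    rw [← bosonRep_monomialMatrix_modeShift_mulVec_bellVec 1 (c := 1) (fun _ => one_pow 2),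
      mulVec_mulVec, hperm,
      hP.mul_permMatrix_eq_self (mul_eq_self_of_mulVec_mulVec_eq (hperm ▸ hfix))]
  have hnat (k : ℕ) : ∀ f : (ZMod m → Fin 2) → ℂ,
      P *ᵥ bellVec (f ∘ shiftConfig k) = P *ᵥ bellVec f := by
    induction k with
    | zero => intro f; simp [shiftConfig_zero]
    | succ k ih =>
      intro f
      have hcomp : f ∘ shiftConfig ((k + 1 : ℕ) : ZMod m) = (f ∘ shiftConfig k) ∘ shiftConfig 1 :=
        funext fun x => by simp [shiftConfig_shiftConfig]
      rw [hcomp, hstep, ih]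
  simpa using hnat l.val f

theorem mulVec_bellVec_shiftAverage (hP : P.IsHermitian)
    (hfix : ∀ z, bosonRep (2 * m) (monomialMatrix (modeShift 1) 1) *ᵥ (P *ᵥ z) = P *ᵥ z)
    (f : (ZMod m → Fin 2) → ℂ) :
    P *ᵥ bellVec (shiftAverage f) = P *ᵥ bellVec f := by
  simp only [shiftAverage, map_smul, map_sum, mulVec_smul, mulVec_sum,
    mulVec_bellVec_comp_shiftConfig hP hfix, Finset.sum_const, Finset.card_univ, ZMod.card]
  rw [← Nat.cast_smul_eq_nsmul ℂ, inv_smul_smul₀ (Nat.cast_ne_zero.mpr (NeZero.ne m))]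

end Stabilizer

/-- For the state `v = |β⁺⟩|β⁻⟩^{⊗(m−1)}` of the Bell-discrimination
scheme, the measurement of the stabilizer group `G = ⟨Z₂ ⊗ I_m, I₂ ⊗ X_m⟩` (generated by the
sign flip `g₁` and the cyclic mode shift `g₂`) yields the all-eigenvalues-one outcome with
probability `‖P v‖² = 1/m`. -/
theorem bell_ancilla_projection_probability (m : ℕ) [NeZero m]
    (g₁ g₂ : Matrix (Fin 2 × ZMod m) (Fin 2 × ZMod m) ℂ)
    (hg₁ : g₁ = Matrix.diagonal fun p => (-1 : ℂ) ^ (p.1 : ℕ))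
    (hg₂ : g₂ = Matrix.of fun p q => if p = (q.1, q.2 + 1) then 1 else 0)
    (v : BosonIdx (Fin 2 × ZMod m) (2 * m) → ℂ)
    (hv : v = ((Real.sqrt 2 ^ m : ℝ) : ℂ)⁻¹ •
      ∑ x : ZMod m → Fin 2, (∏ j ∈ Finset.univ.erase (0 : ZMod m), (-1 : ℂ) ^ (x j : ℕ)) •
        (Pi.single (nuX m x) (1 : ℂ) : BosonIdx (Fin 2 × ZMod m) (2 * m) → ℂ))
    (P : Matrix (BosonIdx (Fin 2 × ZMod m) (2 * m)) (BosonIdx (Fin 2 × ZMod m) (2 * m)) ℂ)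
    -- `P` is the orthogonal projection onto the joint `+1`-eigenspace of `B(G)`:
    (hP1 : P.IsHermitian) (hP2 : P * P = P)
    (hP3 : ∀ w : BosonIdx (Fin 2 × ZMod m) (2 * m) → ℂ,
      P.mulVec w = w ↔ ∀ g ∈ Submonoid.closure {g₁, g₂},
        (bosonRep (2 * m) g).mulVec w = w) :
    ∑ ν : BosonIdx (Fin 2 × ZMod m) (2 * m), ‖(P.mulVec v) ν‖ ^ 2 =
      1 / m := by
  subst hg₁ hg₂
  have hv' : v = bellVec (bellAmplitude m) := by
    rw [hv, bellAmplitude, map_smul, bellVec, Fintype.linearCombination_apply]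
    rfl
  have hfix (z : BosonIdx (Fin 2 × ZMod m) (2 * m) → ℂ) :
      bosonRep (2 * m) (monomialMatrix (modeShift 1) 1) *ᵥ (P *ᵥ z) = P *ᵥ z := by
    rw [monomialMatrix_modeShift_one]
    exact (hP3 (P *ᵥ z)).mp (by rw [mulVec_mulVec, hP2]) _
      (Submonoid.subset_closure (Set.mem_insert_of_mem _ rfl))
  have hPv : P *ᵥ v = bellVec (shiftAverage (bellAmplitude m)) := by
    rw [hv', ← mulVec_bellVec_shiftAverage hP1 hfix]
    exact (hP3 _).mpr fun g hg =>
      bosonRep_mulVec_bellVec_shiftAverage (closure_le_signedShifts hg) _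
  apply RCLike.ofReal_injective (K := ℂ)
  rw [sum_norm_sq_mulVec_eq_star_dotProduct hP1 hP2, hPv, hv', star_bellVec_dotProduct]
  simp only [bellVec_apply_nuX]
  rw [sum_star_mul_shiftAverage_bellAmplitude]
  push_cast
  rfl

end BSF
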